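/- arXiv:1312.3428 — 3 statements merged into one kernel-verified Lean document; each statement's English description precedes it below -/
import Mathlib

section
/- Let M be a matroid on E = {1,…,d}, let c ∈ E be an element that is not a coloop of M, and number the bases B_1,…,B_n of M so that c ∉ B_j for j ∈ [γ] and c ∈ B_j for j ∈ [n]∖[γ]. If F is a homogeneous generating set of binomials for the toric ideal J_M ⊆ K[x_1,…,x_n], then F̃ is a generating set for the toric ideal J_{D̃_M} ⊆ K[x¹_1,…,x¹_n,x²_1,…,x²_γ]. -/
open MvPolynomial


section Enumerated

/-- The toric map `π_M` of an enumerated family of bases `B_1, …, B_n` of a matroid on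
`{1, …, d}` : the variable `x_j` is sent to `∏_{l ∈ B_j} s_l`. -/
noncomputable def enumToricMap (K : Type) [Field K] {d n : ℕ} (B : Fin n → Finset (Fin d)) :
    MvPolynomial (Fin n) K →ₐ[K] MvPolynomial (Fin d) K :=
  aeval fun j => ∏ l ∈ B j, X l

/-- The toric ideal `J_M = ker π_M` of an enumerated family of bases. -/
noncomputable def enumToricIdeal (K : Type) [Field K] {d n : ℕ} (B : Fin n → Finset (Fin d)) :
    Ideal (MvPolynomial (Fin n) K) :=
  RingHom.ker (enumToricMap K B).toRingHom

/-- The map `π̃_M` associated to the matrix `D̃_M`: the variable `Sum.inl j` is `x¹_j`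
(sent to `S^{b_j}·w_1`) and `Sum.inr j` is `x²_j` (sent to `S^{b_j}·w_2`); the two extra
variables `w_1, w_2` of the target are `X (Sum.inr 0)` and `X (Sum.inr 1)`. -/
noncomputable def tildeToricMap (K : Type) [Field K] {d n γ : ℕ} (hγ : γ ≤ n)
    (B : Fin n → Finset (Fin d)) :
    MvPolynomial (Fin n ⊕ Fin γ) K →ₐ[K] MvPolynomial (Fin d ⊕ Fin 2) K :=
  aeval (Sum.elim
    (fun j => (∏ l ∈ B j, X (Sum.inl l)) * X (Sum.inr 0))
    (fun j => (∏ l ∈ B (Fin.castLE hγ j), X (Sum.inl l)) * X (Sum.inr 1)))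

/-- The variable `x^i_j` for a superscript `i ∈ {1,2}` (encoded as `Fin 2`, with `0 ↔ 1` and
`1 ↔ 2`) and `j ∈ [γ]`. -/
def xSup {n γ : ℕ} (hγ : γ ≤ n) (i : Fin 2) (a : Fin γ) : Fin n ⊕ Fin γ :=
  if i = 0 then Sum.inl (Fin.castLE hγ a) else Sum.inr a

/-- `f` is a binomial of the standard form
`∏_{l<u} x_{j_l} · ∏_{l<v} x_{k_l} - ∏_{l<u} x_{j'_l} · ∏_{l<v} x_{k'_l}`,
where the `j`'s are in `[γ]` and the `k`'s are in `[n] ∖ [γ]`. -/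
def IsStdBinomial {K : Type} [Field K] {n : ℕ} (γ : ℕ) (hγ : γ ≤ n)
    (f : MvPolynomial (Fin n) K) : Prop :=
  ∃ (u v : ℕ) (j j' : Fin u → Fin γ) (k k' : Fin v → Fin n),
    (∀ l, γ ≤ (k l : ℕ)) ∧ (∀ l, γ ≤ (k' l : ℕ)) ∧
    f = (∏ l, X (Fin.castLE hγ (j l))) * (∏ l, X (k l)) -
        (∏ l, X (Fin.castLE hγ (j' l))) * (∏ l, X (k' l))

/-- The lifted set `F̃ = {f^I : f ∈ F, I ∈ {1,2}^{u_f}} ∪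
{x¹_{j₂}x²_{j₁} - x¹_{j₁}x²_{j₂} : 1 ≤ j₁ < j₂ ≤ γ}`. -/
def liftedSet (K : Type) [Field K] {n : ℕ} {γ : ℕ} (hγ : γ ≤ n)
    (F : Set (MvPolynomial (Fin n) K)) : Set (MvPolynomial (Fin n ⊕ Fin γ) K) :=
  {g | ∃ (u v : ℕ) (j j' : Fin u → Fin γ) (k k' : Fin v → Fin n) (I : Fin u → Fin 2),
      (∀ l, γ ≤ (k l : ℕ)) ∧ (∀ l, γ ≤ (k' l : ℕ)) ∧
      ((∏ l, X (Fin.castLE hγ (j l))) * (∏ l, X (k l)) -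
        (∏ l, X (Fin.castLE hγ (j' l))) * (∏ l, X (k' l)) ∈ F) ∧
      g = (∏ l, X (xSup hγ (I l) (j l))) * (∏ l, X (Sum.inl (k l))) -
          (∏ l, X (xSup hγ (I l) (j' l))) * (∏ l, X (Sum.inl (k' l)))}
  ∪ {g | ∃ j₁ j₂ : Fin γ, j₁ < j₂ ∧
      g = X (Sum.inl (Fin.castLE hγ j₂)) * X (Sum.inr j₁) -
          X (Sum.inl (Fin.castLE hγ j₁)) * X (Sum.inr j₂)}

end Enumerated

/-!
The map `π̃_M` sends monomials to monomials, so its kernel is spanned by the binomials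
`x^a - x^b` with `π̃_M(x^a) = π̃_M(x^b)`. For such a pair, forgetting superscripts gives exponents
`α, β` with `x^α - x^β ∈ J_M = ⟨F⟩`, and `a`, `b` contain the same number of superscript-2
variables. The binomials `x¹_{j₂}x²_{j₁} - x¹_{j₁}x²_{j₂}` connect any two lifts of one monomial
with the same number of superscript-2 variables. Hence "all lifts of `α` and `β` with equal
superscript-2 count are connected modulo `⟨F̃⟩`" is an additive congruence on exponents; it
contains the moves given by `F` (lift them by the `f^I`), and a binomial in the ideal spanned
by binomials relates its exponents in any additive congruence containing theirs (pass to the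
monoid algebra of the quotient).
-/

open Finsupp (single)

theorem Finsupp.exists_eq_single_one_add {α : Type*} {a : α →₀ ℕ} {x : α} (h : a x ≠ 0) :
    ∃ b, a = single x 1 + b :=
  exists_add_of_le (by rwa [Finsupp.single_le_iff, Nat.one_le_iff_ne_zero])

theorem Fin.exists_sum_val_eq {u t : ℕ} (ht : t ≤ u) : ∃ I : Fin u → Fin 2, ∑ l, (I l : ℕ) = t :=
  ⟨fun l => if (l : ℕ) < t then 1 else 0, by
    simp [apply_ite, Finset.sum_boole, Fin.card_filter_val_lt, ht]⟩

namespace MvPolynomial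

variable {R σ τ : Type*} [CommRing R]

noncomputable def binomialCon (I : Ideal (MvPolynomial σ R)) : AddCon (σ →₀ ℕ) where
  r a b := monomial a 1 - monomial b 1 ∈ I
  iseqv :=
    { refl := fun a => by simp
      symm := fun h => by simpa using neg_mem h
      trans := fun h₁ h₂ => by simpa using add_mem h₁ h₂ }
  add' {a b a' b'} h h' := by
    have : monomial (a + a') 1 - monomial (b + b') 1 =
        monomial a' (1 : R) * (monomial a 1 - monomial b 1) +
          monomial b 1 * (monomial a' 1 - monomial b' 1) := by
      simp only [mul_sub, monomial_mul, one_mul]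
      rw [add_comm a' a, add_comm a' b]
      ring
    rw [this]
    exact add_mem (I.mul_mem_left _ h) (I.mul_mem_left _ h')

theorem prod_X_mul_prod_X {ι κ : Type*} [Fintype ι] [Fintype κ] (f : ι → σ) (g : κ → σ) :
    (∏ l, X (f l)) * ∏ l, X (g l) =
      (monomial (∑ l, single (f l) 1 + ∑ l, single (g l) 1) 1 :
        MvPolynomial σ R) := by
  rw [← one_mul (1 : R), ← monomial_mul, monomial_sum_one, monomial_sum_one]
  rfl

theorem X_mem_mrange_monomialOneHom (s : σ) :
    X s ∈ MonoidHom.mrange (monomialOneHom R σ) :=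
  ⟨Multiplicative.ofAdd (single s 1), rfl⟩

theorem aeval_monomial_mem_mrange_monomialOneHom {f : σ → MvPolynomial τ R}
    (hf : ∀ s, f s ∈ MonoidHom.mrange (monomialOneHom R τ)) (a : σ →₀ ℕ) :
    aeval f (monomial a 1 : MvPolynomial σ R) ∈ MonoidHom.mrange (monomialOneHom R τ) := by
  rw [aeval_monomial, map_one, one_mul]
  exact Submonoid.prod_mem _ fun s _ => pow_mem (hf s) _

theorem ker_le_span_binomials (φ : MvPolynomial σ R →ₐ[R] MvPolynomial τ R)
    (hφ : ∀ a, φ (monomial a 1) ∈ MonoidHom.mrange (monomialOneHom R τ)) :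
    RingHom.ker φ ≤ Ideal.span
      {g | ∃ a b, φ (monomial a 1) = φ (monomial b 1) ∧ g = monomial a 1 - monomial b 1} := by
  classical
  choose q hq using hφ
  set Q : (σ →₀ ℕ) → (τ →₀ ℕ) := fun a => (q a).toAdd
  have hQ (a : σ →₀ ℕ) : φ (monomial a 1) = monomial (Q a) 1 := (hq a).symm
  have hφL : φ.toLinearMap =
      (AddMonoidAlgebra.mapDomainLinearMap R R Q : MvPolynomial σ R →ₗ[R] MvPolynomial τ R) := by
    refine linearMap_ext fun a => LinearMap.ext_ring ?_
    simp only [LinearMap.comp_apply, AlgHom.toLinearMap_apply, hQ]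
    exact (AddMonoidAlgebra.mapDomainLinearMap_single Q 1 a).symm
  -- `r` picks one exponent in each fibre of `Q`. Pushing `p` forward along `r` factors through
  -- `φ p = 0`, so `p` is a combination of the binomials `x^a - x^(r a)`.
  intro p hp
  set r := Function.invFun Q ∘ Q
  have hr (a : σ →₀ ℕ) : Q (r a) = Q a := Function.invFun_eq ⟨a, rfl⟩
  have hLr : AddMonoidAlgebra.mapDomainLinearMap R R r p = 0 := by
    rw [AddMonoidAlgebra.mapDomainLinearMap_comp, LinearMap.comp_apply, ← LinearMap.congr_fun hφL,
      AlgHom.toLinearMap_apply, RingHom.mem_ker.mp hp, map_zero]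
  have hLr' : AddMonoidAlgebra.mapDomainLinearMap R R r p =
      ∑ a ∈ p.support, monomial (r a) (coeff a p) := by
    conv_lhs => rw [p.as_sum]
    simp [map_sum, ← single_eq_monomial]
  have hp : p = ∑ a ∈ p.support, (monomial a (coeff a p) - monomial (r a) (coeff a p)) := by
    rw [Finset.sum_sub_distrib, ← p.as_sum, ← hLr', hLr, sub_zero]
  rw [hp]
  refine Ideal.sum_mem _ fun a _ => ?_
  rw [← mul_one (coeff a p), ← C_mul_monomial, ← C_mul_monomial, ← mul_sub]
  exact Ideal.mul_mem_left _ _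
    (Ideal.subset_span ⟨a, r a, by rw [hQ, hQ, hr], rfl⟩)

theorem _root_.AddCon.rel_of_binomial_mem_span [Nontrivial R] (c : AddCon (σ →₀ ℕ))
    {S : Set (MvPolynomial σ R)}
    (hS : ∀ f ∈ S, ∃ a b, c a b ∧ f = monomial a 1 - monomial b 1) {α β : σ →₀ ℕ}
    (h : monomial α 1 - monomial β 1 ∈ Ideal.span S) : c α β := by
  let T : MvPolynomial σ R →+* AddMonoidAlgebra R c.Quotient :=
    AddMonoidAlgebra.mapDomainRingHom R c.mk'
  have hT (a : σ →₀ ℕ) : T (monomial a 1) = AddMonoidAlgebra.single (c.mk' a) 1 := by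
    rw [← single_eq_monomial]
    exact AddMonoidAlgebra.mapDomain_single
  have hspan : Ideal.span S ≤ RingHom.ker T := by
    rw [Ideal.span_le]
    intro f hf
    obtain ⟨a, b, hab, rfl⟩ := hS f hf
    simp [RingHom.mem_ker, hT, (AddCon.eq c).mpr hab]
  have := hspan h
  rw [RingHom.mem_ker, map_sub, hT, hT, sub_eq_zero,
    AddMonoidAlgebra.single_left_inj one_ne_zero] at this
  exact (AddCon.eq c).mp this

end MvPolynomial

noncomputable section Lifting

variable {n γ : ℕ} (hγ : γ ≤ n)

-- `x¹_m ↦ x_m` and `x²_j ↦ x_j` on exponents.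
def flatten : ((Fin n ⊕ Fin γ) →₀ ℕ) →+ (Fin n →₀ ℕ) :=
  Finsupp.mapDomain.addMonoidHom (Sum.elim id (Fin.castLE hγ))

def supTwoDeg : ((Fin n ⊕ Fin γ) →₀ ℕ) →+ ℕ := ∑ j, Finsupp.applyAddHom (Sum.inr j)

def lowDeg : (Fin n →₀ ℕ) →+ ℕ := ∑ j, Finsupp.applyAddHom (Fin.castLE hγ j)

@[simp]
theorem flatten_single_inl (m : Fin n) (k : ℕ) : flatten hγ (single (.inl m) k) = single m k := by
  simp [flatten]

@[simp]
theorem flatten_single_inr (j : Fin γ) (k : ℕ) :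
    flatten hγ (single (.inr j) k) = single (Fin.castLE hγ j) k := by
  simp [flatten]

@[simp]
theorem flatten_single_xSup (i : Fin 2) (j : Fin γ) (k : ℕ) :
    flatten hγ (single (xSup hγ i j) k) = single (Fin.castLE hγ j) k := by
  unfold xSup; split_ifs <;> simp

theorem supTwoDeg_apply (a : (Fin n ⊕ Fin γ) →₀ ℕ) : supTwoDeg a = ∑ j, a (.inr j) := by
  simp [supTwoDeg]

@[simp]
theorem supTwoDeg_single_inl (m : Fin n) (k : ℕ) :
    supTwoDeg (single (.inl m : Fin n ⊕ Fin γ) k) = 0 := by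
  simp [supTwoDeg_apply]

@[simp]
theorem supTwoDeg_single_inr (j : Fin γ) (k : ℕ) :
    supTwoDeg (single (.inr j : Fin n ⊕ Fin γ) k) = k := by
  simp [supTwoDeg_apply, Finsupp.single_apply]

@[simp]
theorem supTwoDeg_single_xSup (i : Fin 2) (j : Fin γ) :
    supTwoDeg (single (xSup hγ i j) 1) = i := by
  fin_cases i <;> simp [xSup]

theorem lowDeg_apply (α : Fin n →₀ ℕ) : lowDeg hγ α = ∑ j, α (Fin.castLE hγ j) := by
  simp [lowDeg]

@[simp]
theorem lowDeg_single_castLE (j : Fin γ) (k : ℕ) :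
    lowDeg hγ (single (Fin.castLE hγ j) k) = k := by
  simp [lowDeg_apply, Finsupp.single_apply, Fin.castLE_inj]

theorem lowDeg_single_of_le {m : Fin n} (hm : γ ≤ m) (k : ℕ) : lowDeg hγ (single m k) = 0 := by
  simp only [lowDeg_apply, Finsupp.single_apply]
  refine Finset.sum_eq_zero fun j _ => if_neg fun h => ?_
  rw [Fin.ext_iff, Fin.val_castLE] at h
  omega

theorem flatten_apply (a : (Fin n ⊕ Fin γ) →₀ ℕ) (m : Fin n) :
    flatten hγ a m = a (.inl m) + ∑ j, if Fin.castLE hγ j = m then a (.inr j) else 0 := by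
  conv_lhs => rw [← Finsupp.univ_sum_single a, map_sum, Finsupp.finsetSum_apply,
    Fintype.sum_sum_type]
  simp [Finsupp.single_apply]

theorem flatten_apply_castLE (a : (Fin n ⊕ Fin γ) →₀ ℕ) (j : Fin γ) :
    flatten hγ a (Fin.castLE hγ j) = a (.inl (Fin.castLE hγ j)) + a (.inr j) := by
  simp [flatten_apply, Fin.castLE_inj]

theorem flatten_apply_of_le (a : (Fin n ⊕ Fin γ) →₀ ℕ) {m : Fin n} (hm : γ ≤ m) :
    flatten hγ a m = a (.inl m) := by
  rw [flatten_apply, add_eq_left]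
  refine Finset.sum_eq_zero fun j _ => if_neg fun h => ?_
  rw [Fin.ext_iff, Fin.val_castLE] at h
  omega

theorem lowDeg_flatten (a : (Fin n ⊕ Fin γ) →₀ ℕ) :
    lowDeg hγ (flatten hγ a) = ∑ j, a (.inl (Fin.castLE hγ j)) + supTwoDeg a := by
  simp [lowDeg_apply, flatten_apply_castLE, Finset.sum_add_distrib, supTwoDeg_apply]

theorem supTwoDeg_le_lowDeg_flatten (a : (Fin n ⊕ Fin γ) →₀ ℕ) :
    supTwoDeg a ≤ lowDeg hγ (flatten hγ a) := by
  rw [lowDeg_flatten]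
  exact Nat.le_add_left _ _

theorem eq_of_flatten_eq {a b : (Fin n ⊕ Fin γ) →₀ ℕ} (hf : flatten hγ a = flatten hγ b)
    (hinr : ∀ j, a (.inr j) = b (.inr j)) : a = b := by
  ext (m | j)
  · by_cases hm : (m : ℕ) < γ
    · obtain ⟨j, rfl⟩ : ∃ j : Fin γ, Fin.castLE hγ j = m := ⟨⟨m, hm⟩, rfl⟩
      have := DFunLike.congr_fun hf (Fin.castLE hγ j)
      rw [flatten_apply_castLE, flatten_apply_castLE, hinr j] at this
      omega
    · have := DFunLike.congr_fun hf m
      rwa [flatten_apply_of_le hγ _ (not_lt.mp hm), flatten_apply_of_le hγ _ (not_lt.mp hm)] at this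
  · exact hinr j

theorem exists_flatten_eq (α : Fin n →₀ ℕ) {t : ℕ} (ht : t ≤ lowDeg hγ α) :
    ∃ a, flatten hγ a = α ∧ supTwoDeg a = t := by
  induction t with
  | zero =>
    refine ⟨Finsupp.mapDomain .inl α, ?_, ?_⟩
    · simp [flatten, ← Finsupp.mapDomain_comp]
    · simp [supTwoDeg_apply, Finsupp.mapDomain_of_notMem_range]
  | succ t ih =>
    obtain ⟨a, rfl, rfl⟩ := ih (by omega)
    obtain ⟨j, hj⟩ : ∃ j, a (.inl (Fin.castLE hγ j)) ≠ 0 := by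
      by_contra! h
      rw [lowDeg_flatten, Finset.sum_eq_zero fun j _ => h j] at ht
      omega
    obtain ⟨δ, rfl⟩ := Finsupp.exists_eq_single_one_add hj
    exact ⟨single (.inr j) 1 + δ, by simp, by simp [add_comm]⟩

end Lifting

noncomputable section Connectivity

variable {K : Type} [Field K] {n γ : ℕ} (hγ : γ ≤ n) (F : Set (MvPolynomial (Fin n) K))

abbrev liftCon : AddCon ((Fin n ⊕ Fin γ) →₀ ℕ) :=
  MvPolynomial.binomialCon (Ideal.span (liftedSet K hγ F))

variable {hγ F}

theorem liftCon_exchange {j₁ j₂ : Fin γ} (hne : j₁ ≠ j₂) :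
    liftCon hγ F (single (.inl (Fin.castLE hγ j₁)) 1 + single (.inr j₂) 1)
      (single (.inr j₁) 1 + single (.inl (Fin.castLE hγ j₂)) 1) := by
  have hgen {j₁ j₂ : Fin γ} (h : j₁ < j₂) :
      liftCon hγ F (single (.inl (Fin.castLE hγ j₂)) 1 + single (.inr j₁) 1)
        (single (.inl (Fin.castLE hγ j₁)) 1 + single (.inr j₂) 1) :=
    Ideal.subset_span (Or.inr ⟨j₁, j₂, h, by simp only [X, monomial_mul, one_mul]⟩)
  rw [add_comm (single (Sum.inr j₁ : Fin n ⊕ Fin γ) 1)]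
  rcases hne.lt_or_gt with h | h
  · exact (liftCon hγ F).symm (hgen h)
  · exact hgen h

theorem exists_liftCon_single_inr_add {b : (Fin n ⊕ Fin γ) →₀ ℕ} {j : Fin γ}
    (hb : flatten hγ b (Fin.castLE hγ j) ≠ 0) (ht : supTwoDeg b ≠ 0) :
    ∃ b', liftCon hγ F b (single (.inr j) 1 + b') ∧
      flatten hγ b = flatten hγ (single (.inr j) 1 + b') ∧
      supTwoDeg b = supTwoDeg (single (.inr j) 1 + b') := by
  by_cases hj : b (.inr j) = 0
  · rw [flatten_apply_castLE, hj, add_zero] at hb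
    obtain ⟨j', -, hj'⟩ := Finset.exists_ne_zero_of_sum_ne_zero (supTwoDeg_apply b ▸ ht)
    have hne : j ≠ j' := by rintro rfl; exact hj' hj
    obtain ⟨b₁, rfl⟩ := Finsupp.exists_eq_single_one_add hb
    obtain ⟨δ, rfl⟩ :=
      Finsupp.exists_eq_single_one_add (a := b₁) (x := .inr j') (by simpa using hj')
    refine ⟨single (.inl (Fin.castLE hγ j')) 1 + δ, ?_, by simp [add_left_comm], by simp⟩
    simpa only [add_assoc] using
      (liftCon hγ F).add (liftCon_exchange hne) ((liftCon hγ F).refl δ)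
  · obtain ⟨b', rfl⟩ := Finsupp.exists_eq_single_one_add hj
    exact ⟨b', (liftCon hγ F).refl _, rfl, rfl⟩

theorem liftCon_of_flatten_eq {a b : (Fin n ⊕ Fin γ) →₀ ℕ} (hf : flatten hγ a = flatten hγ b)
    (ht : supTwoDeg a = supTwoDeg b) : liftCon hγ F a b := by
  -- Induction on the number of `x²`-variables: make `b` share one of them with `a`, then cancel it.
  obtain ⟨t, hta⟩ : ∃ t, supTwoDeg a = t := ⟨_, rfl⟩
  induction t generalizing a b with
  | zero =>
    have hzero {c : (Fin n ⊕ Fin γ) →₀ ℕ} (hc : supTwoDeg c = 0) (j : Fin γ) : c (.inr j) = 0 :=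
      Finset.sum_eq_zero_iff.mp (supTwoDeg_apply c ▸ hc) j (Finset.mem_univ j)
    rw [eq_of_flatten_eq hγ hf fun j => by rw [hzero hta, hzero (ht ▸ hta)]]
    exact (liftCon hγ F).refl b
  | succ t ih =>
    obtain ⟨j, -, hj⟩ := Finset.exists_ne_zero_of_sum_ne_zero
      (show ∑ j, a (.inr j) ≠ 0 by rw [← supTwoDeg_apply, hta]; omega)
    obtain ⟨a', rfl⟩ := Finsupp.exists_eq_single_one_add hj
    obtain ⟨b', hbb', hfb', htb'⟩ := exists_liftCon_single_inr_add (F := F) (b := b) (j := j)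
      (by rw [← hf]; simp) (by omega)
    refine (liftCon hγ F).trans ?_ ((liftCon hγ F).symm hbb')
    refine (liftCon hγ F).add ((liftCon hγ F).refl _) (ih ?_ ?_ ?_)
    · simpa using hf.trans hfb'
    · simpa using ht.trans htb'
    · simp only [map_add, supTwoDeg_single_inr] at hta
      omega

end Connectivity

noncomputable section Moves

variable {K : Type} [Field K] {n γ : ℕ} (hγ : γ ≤ n) (F : Set (MvPolynomial (Fin n) K))

def stdExp {u v : ℕ} (j : Fin u → Fin γ) (k : Fin v → Fin n) : Fin n →₀ ℕ :=
  ∑ l, single (Fin.castLE hγ (j l)) 1 + ∑ l, single (k l) 1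

def liftExp {u v : ℕ} (I : Fin u → Fin 2) (j : Fin u → Fin γ) (k : Fin v → Fin n) :
    (Fin n ⊕ Fin γ) →₀ ℕ :=
  ∑ l, single (xSup hγ (I l) (j l)) 1 + ∑ l, single (.inl (k l)) 1

theorem flatten_liftExp {u v : ℕ} (I : Fin u → Fin 2) (j : Fin u → Fin γ) (k : Fin v → Fin n) :
    flatten hγ (liftExp hγ I j k) = stdExp hγ j k := by
  simp [liftExp, stdExp]

theorem supTwoDeg_liftExp {u v : ℕ} (I : Fin u → Fin 2) (j : Fin u → Fin γ)
    (k : Fin v → Fin n) : supTwoDeg (liftExp hγ I j k) = ∑ l, (I l : ℕ) := by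
  simp [liftExp]

theorem lowDeg_stdExp {u v : ℕ} (j : Fin u → Fin γ) {k : Fin v → Fin n}
    (hk : ∀ l, γ ≤ (k l : ℕ)) : lowDeg hγ (stdExp hγ j k) = u := by
  simp [stdExp, lowDeg_single_of_le hγ (hk _)]

def LiftRel (α β : Fin n →₀ ℕ) : Prop :=
  lowDeg hγ α = lowDeg hγ β ∧
    ∀ a b, flatten hγ a = α → flatten hγ b = β → supTwoDeg a = supTwoDeg b → liftCon hγ F a b

variable {hγ F}

theorem LiftRel.trans {α β ξ : Fin n →₀ ℕ} (h₁ : LiftRel hγ F α β) (h₂ : LiftRel hγ F β ξ) :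
    LiftRel hγ F α ξ := by
  refine ⟨h₁.1.trans h₂.1, fun a c ha hc hac => ?_⟩
  obtain ⟨b, hb, hab⟩ := exists_flatten_eq hγ β (t := supTwoDeg a)
    (h₁.1 ▸ ha ▸ supTwoDeg_le_lowDeg_flatten hγ a)
  exact (liftCon hγ F).trans (h₁.2 a b ha hb hab.symm) (h₂.2 b c hb hc (hab.trans hac))

theorem LiftRel.add {α β α' β' : Fin n →₀ ℕ} (h : LiftRel hγ F α β) (h' : LiftRel hγ F α' β') :
    LiftRel hγ F (α + α') (β + β') := by
  refine ⟨by simp [h.1, h'.1], fun a b ha hb hab => ?_⟩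
  have hcap := supTwoDeg_le_lowDeg_flatten hγ a
  rw [ha, map_add] at hcap
  -- Split the `x²`-count of `a` between lifts of the two summands.
  set t := min (supTwoDeg a) (lowDeg hγ α)
  obtain ⟨a₁, ha₁, ht₁⟩ := exists_flatten_eq hγ α (t := t) (min_le_right _ _)
  obtain ⟨a₂, ha₂, ht₂⟩ := exists_flatten_eq hγ α' (t := supTwoDeg a - t) (by omega)
  obtain ⟨b₁, hb₁, hs₁⟩ := exists_flatten_eq hγ β (t := t) (h.1 ▸ min_le_right _ _)
  obtain ⟨b₂, hb₂, hs₂⟩ := exists_flatten_eq hγ β' (t := supTwoDeg a - t) (by rw [← h'.1]; omega)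
  have hsplit_a : liftCon hγ F a (a₁ + a₂) :=
    liftCon_of_flatten_eq (by simp [ha, ha₁, ha₂]) (by simp only [map_add, ht₁, ht₂]; omega)
  have hsplit_b : liftCon hγ F (b₁ + b₂) b :=
    liftCon_of_flatten_eq (by simp [hb, hb₁, hb₂]) (by simp only [map_add, hs₁, hs₂]; omega)
  exact (liftCon hγ F).trans hsplit_a <| (liftCon hγ F).trans
    ((liftCon hγ F).add (h.2 a₁ b₁ ha₁ hb₁ (ht₁.trans hs₁.symm))
      (h'.2 a₂ b₂ ha₂ hb₂ (ht₂.trans hs₂.symm))) hsplit_b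

variable (hγ F)

def liftRelCon : AddCon (Fin n →₀ ℕ) where
  r := LiftRel hγ F
  iseqv :=
    { refl := fun _ => ⟨rfl, fun _ _ ha hb => liftCon_of_flatten_eq (ha.trans hb.symm)⟩
      symm := fun h => ⟨h.1.symm, fun a b ha hb hab => (liftCon hγ F).symm (h.2 b a hb ha hab.symm)⟩
      trans := LiftRel.trans }
  add' := LiftRel.add

variable {hγ F}

theorem liftRel_stdExp {u v : ℕ} {j j' : Fin u → Fin γ} {k k' : Fin v → Fin n}
    (hk : ∀ l, γ ≤ (k l : ℕ)) (hk' : ∀ l, γ ≤ (k' l : ℕ))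
    (hmem : (∏ l, X (Fin.castLE hγ (j l))) * (∏ l, X (k l)) -
        (∏ l, X (Fin.castLE hγ (j' l))) * (∏ l, X (k' l)) ∈ F) :
    LiftRel hγ F (stdExp hγ j k) (stdExp hγ j' k') := by
  refine ⟨by rw [lowDeg_stdExp hγ j hk, lowDeg_stdExp hγ j' hk'], fun a b ha hb hab => ?_⟩
  obtain ⟨I, hI⟩ := Fin.exists_sum_val_eq (u := u) (t := supTwoDeg a)
    (lowDeg_stdExp hγ j hk ▸ ha ▸ supTwoDeg_le_lowDeg_flatten hγ a)
  have hgen : liftCon hγ F (liftExp hγ I j k) (liftExp hγ I j' k') :=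
    Ideal.subset_span (Or.inl ⟨u, v, j, j', k, k', I, hk, hk', hmem, by
      rw [prod_X_mul_prod_X, prod_X_mul_prod_X]; rfl⟩)
  refine (liftCon hγ F).trans ?_ ((liftCon hγ F).trans hgen ?_)
  · exact liftCon_of_flatten_eq (by rw [ha, flatten_liftExp]) (by rw [supTwoDeg_liftExp, hI])
  · exact liftCon_of_flatten_eq (by rw [hb, flatten_liftExp])
      (by rw [supTwoDeg_liftExp, hI, hab])

theorem liftRel_of_binomial_mem_span (hrep : ∀ f ∈ F, IsStdBinomial γ hγ f) {α β : Fin n →₀ ℕ}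
    (h : monomial α 1 - monomial β 1 ∈ Ideal.span F) : LiftRel hγ F α β := by
  refine (liftRelCon hγ F).rel_of_binomial_mem_span (fun f hf => ?_) h
  obtain ⟨u, v, j, j', k, k', hk, hk', rfl⟩ := hrep f hf
  exact ⟨_, _, liftRel_stdExp hk hk' hf, by rw [prod_X_mul_prod_X, prod_X_mul_prod_X]; rfl⟩

end Moves

section Toric

variable {K : Type} [Field K] {d n γ : ℕ} (hγ : γ ≤ n) (B : Fin n → Finset (Fin d))

theorem tildeToricMap_monomial_mem_mrange (a : (Fin n ⊕ Fin γ) →₀ ℕ) :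
    tildeToricMap K hγ B (monomial a 1) ∈ MonoidHom.mrange (monomialOneHom K (Fin d ⊕ Fin 2)) := by
  unfold tildeToricMap
  refine aeval_monomial_mem_mrange_monomialOneHom (fun s => ?_) a
  cases s <;>
  · exact mul_mem (prod_mem fun l _ => X_mem_mrange_monomialOneHom _)
      (X_mem_mrange_monomialOneHom _)

theorem aeval_comp_tildeToricMap_eq_enumToricMap_comp_rename :
    (aeval (Sum.elim X fun _ => (1 : MvPolynomial (Fin d) K))).comp (tildeToricMap K hγ B) =
      (enumToricMap K B).comp (rename (Sum.elim id (Fin.castLE hγ))) := by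
  ext (j | j) <;> simp [tildeToricMap, enumToricMap]

-- Specialising `w₂ ↦ X` and all other variables to `1` reads off the number of `x²`-variables.
theorem aeval_comp_tildeToricMap_eq_aeval :
    (aeval (Sum.elim (fun _ => 1) ![(1 : Polynomial K), Polynomial.X])).comp
        (tildeToricMap K hγ B) =
      aeval (Sum.elim (fun _ => 1) fun _ => (Polynomial.X : Polynomial K)) := by
  ext (j | j) <;> simp [tildeToricMap]

theorem aeval_monomial_eq_X_pow_supTwoDeg (a : (Fin n ⊕ Fin γ) →₀ ℕ) :
    aeval (Sum.elim (fun _ => 1) fun _ => (Polynomial.X : Polynomial K)) (monomial a (1 : K)) =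
      Polynomial.X ^ supTwoDeg a := by
  simp [aeval_monomial, Finsupp.prod_fintype, Fintype.prod_sum_type, supTwoDeg_apply,
    Finset.prod_pow_eq_pow_sum]

variable {hγ B}

theorem enumToricMap_flatten_eq {a b : (Fin n ⊕ Fin γ) →₀ ℕ}
    (h : tildeToricMap K hγ B (monomial a 1) = tildeToricMap K hγ B (monomial b 1)) :
    enumToricMap K B (monomial (flatten hγ a) 1) =
      enumToricMap K B (monomial (flatten hγ b) 1) := by
  have := congrArg (aeval (Sum.elim X fun _ => (1 : MvPolynomial (Fin d) K))) h
  rwa [← AlgHom.comp_apply, ← AlgHom.comp_apply,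
    aeval_comp_tildeToricMap_eq_enumToricMap_comp_rename, AlgHom.comp_apply, AlgHom.comp_apply,
    rename_monomial, rename_monomial] at this

theorem supTwoDeg_eq_of_tildeToricMap_eq {a b : (Fin n ⊕ Fin γ) →₀ ℕ}
    (h : tildeToricMap K hγ B (monomial a 1) = tildeToricMap K hγ B (monomial b 1)) :
    supTwoDeg a = supTwoDeg b := by
  have := congrArg (aeval (Sum.elim (fun _ => 1) ![(1 : Polynomial K), Polynomial.X])) h
  simp only [← AlgHom.comp_apply, aeval_comp_tildeToricMap_eq_aeval,
    aeval_monomial_eq_X_pow_supTwoDeg] at this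
  simpa using congrArg Polynomial.natDegree this

variable (hγ B)

theorem tildeToricMap_X_xSup (i : Fin 2) (j : Fin γ) :
    tildeToricMap K hγ B (X (xSup hγ i j)) =
      rename Sum.inl (enumToricMap K B (X (Fin.castLE hγ j))) * X (Sum.inr i) := by
  fin_cases i <;> simp [tildeToricMap, enumToricMap, xSup, map_prod]

theorem tildeToricMap_X_inl (k : Fin n) :
    tildeToricMap K hγ B (X (Sum.inl k)) =
      rename Sum.inl (enumToricMap K B (X k)) * X (Sum.inr 0) := by
  simp [tildeToricMap, enumToricMap, map_prod]

theorem tildeToricMap_prod_X_xSup_mul_prod_X_inl {u v : ℕ} (I : Fin u → Fin 2)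
    (j : Fin u → Fin γ) (k : Fin v → Fin n) :
    tildeToricMap K hγ B ((∏ l, X (xSup hγ (I l) (j l))) * ∏ l, X (Sum.inl (k l))) =
      rename Sum.inl (enumToricMap K B ((∏ l, X (Fin.castLE hγ (j l))) * ∏ l, X (k l))) *
        ((∏ l, X (Sum.inr (I l))) * X (Sum.inr 0) ^ v) := by
  simp only [map_mul, map_prod, tildeToricMap_X_xSup, tildeToricMap_X_inl,
    Finset.prod_mul_distrib, Finset.prod_const, Finset.card_univ, Fintype.card_fin]
  ring

theorem tildeToricMap_eq_zero_of_mem_liftedSet {F : Set (MvPolynomial (Fin n) K)}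
    (hgen : Ideal.span F = enumToricIdeal K B) {g : MvPolynomial (Fin n ⊕ Fin γ) K}
    (hg : g ∈ liftedSet K hγ F) : tildeToricMap K hγ B g = 0 := by
  rcases hg with ⟨u, v, j, j', k, k', I, -, -, hf, rfl⟩ | ⟨j₁, j₂, -, rfl⟩
  · have hf : _ = (0 : MvPolynomial (Fin d) K) := RingHom.mem_ker.mp (hgen ▸ Ideal.subset_span hf)
    rw [AlgHom.toRingHom_eq_coe, RingHom.coe_coe, map_sub, sub_eq_zero] at hf
    rw [map_sub, sub_eq_zero, tildeToricMap_prod_X_xSup_mul_prod_X_inl,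
      tildeToricMap_prod_X_xSup_mul_prod_X_inl, hf]
  · simp only [tildeToricMap, map_sub, map_mul, aeval_X, Sum.elim_inl, Sum.elim_inr]
    ring

end Toric

theorem statement1_general (K : Type) [Field K] {d n γ : ℕ}
    (B : Fin n → Finset (Fin d))
    (hγ : γ ≤ n)
    (F : Set (MvPolynomial (Fin n) K))
    (hrep : ∀ f ∈ F, IsStdBinomial γ hγ f)
    (hgen : Ideal.span F = enumToricIdeal K B) :
    Ideal.span (liftedSet K hγ F) = RingHom.ker (tildeToricMap K hγ B).toRingHom := by
  refine le_antisymm (Ideal.span_le.mpr fun g hg =>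
    RingHom.mem_ker.mpr (tildeToricMap_eq_zero_of_mem_liftedSet hγ B hgen hg)) ?_
  refine (ker_le_span_binomials (tildeToricMap K hγ B)
    (tildeToricMap_monomial_mem_mrange hγ B)).trans (Ideal.span_le.mpr ?_)
  rintro _ ⟨a, b, hab, rfl⟩
  have hflat : monomial (flatten hγ a) 1 - monomial (flatten hγ b) 1 ∈ Ideal.span F := by
    rw [hgen, enumToricIdeal, RingHom.mem_ker, AlgHom.toRingHom_eq_coe, RingHom.coe_coe, map_sub,
      enumToricMap_flatten_eq hab, sub_self]
  exact (liftRel_of_binomial_mem_span hrep hflat).2 a b rfl rfl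
    (supTwoDeg_eq_of_tildeToricMap_eq hab)

/-- If `F` is a homogeneous generating set of binomials for `J_M`, then the lifted set `F̃`
generates `J_{D̃_M}`. -/
theorem statement1 (K : Type) [Field K] {d n γ : ℕ}
    (M : Matroid (Fin d)) (hE : M.E = Set.univ)
    (B : Fin n → Finset (Fin d)) (hBinj : Function.Injective B)
    (hBall : ∀ S : Finset (Fin d), M.IsBase ↑S ↔ ∃ j, B j = S)
    (c : Fin d) (hc : ¬ ∀ S, M.IsBase S → c ∈ S)
    (hγ : γ ≤ n) (hsplit : ∀ j : Fin n, c ∉ B j ↔ (j : ℕ) < γ)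
    (F : Set (MvPolynomial (Fin n) K))
    (hrep : ∀ f ∈ F, IsStdBinomial γ hγ f)
    (hgen : Ideal.span F = enumToricIdeal K B) :
    Ideal.span (liftedSet K hγ F) = RingHom.ker (tildeToricMap K hγ B).toRingHom :=
  statement1_general K B hγ F hrep hgen
end

section
/- If M is a matroid on E = {1,…,d} whose toric ideal J_M is generated by quadratic binomials, then for every c ∈ E the toric ideal J_{M +_c (d+1)} of the series extension of M at c by d+1 is generated by quadratic binomials. -/
open MvPolynomial


section Toric

/-- The toric (bases monomial) map of a matroid: the variables are indexed by the bases of `M`,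
and the variable of a basis `B` is sent to `∏_{l ∈ B} s_l`. -/
noncomputable def matroidToricMap (K : Type) [Field K] {α : Type} [Fintype α] [DecidableEq α]
    (M : Matroid α) :
    MvPolynomial {B : Finset α // M.IsBase ↑B} K →ₐ[K] MvPolynomial α K :=
  aeval fun b => ∏ l ∈ b.1, X l

/-- The toric ideal `J_M` of a matroid `M`. -/
noncomputable def matroidToricIdeal (K : Type) [Field K] {α : Type} [Fintype α] [DecidableEq α]
    (M : Matroid α) : Ideal (MvPolynomial {B : Finset α // M.IsBase ↑B} K) :=
  RingHom.ker (matroidToricMap K M).toRingHom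

/-- `G` consists of quadratic binomials `x_i x_j - x_k x_l`. -/
def IsQuadBinomialSet {σ K : Type} [Field K] (G : Set (MvPolynomial σ K)) : Prop :=
  ∀ f ∈ G, ∃ i j k l : σ, f = X i * X j - X k * X l

/-- The ideal `I` is generated by quadratic binomials. -/
def GeneratedByQuadBinomials {σ K : Type} [Field K] (I : Ideal (MvPolynomial σ K)) : Prop :=
  ∃ G : Set (MvPolynomial σ K), IsQuadBinomialSet G ∧ Ideal.span G = I

end Toric

/-!
Write `y_B` for the basis `B ∪ {d+1}` and `z_B` for the basis `B ∪ {c}` (`c ∉ B`) of the series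
extension, so that the toric map sends `y_B ↦ x_B s_{d+1}` and `z_B ↦ x_B s_c`, where `x_B` is the
monomial of `B` in `M`. The toric ideal of a monomial map is generated by quadratic binomials iff
each fibre of the exponent-weight map is connected by degree-two moves, i.e. iff the kernel
congruence of the weight map is generated by its quadratic relations.

A fibre of `M +_c (d+1)` is determined by a fibre of `M` (after collapsing `y_B, z_B ↦ x_B`)
together with the number of `z`'s. Monomials with the same collapse and the same number of `z`'s
are connected by the moves `y_B z_{B'} ↔ y_{B'} z_B`. A move of `M` lifts to `M +_c (d+1)` with
any prescribed number of `z`'s up to the number of factors `x_B` with `c ∉ B`, and this number is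
invariant under moves of `M`: it is the degree minus the `c`-coordinate of the weight.
-/

namespace AddMonoidAlgebra

theorem mem_span_single_sub_single_of_mapDomain_eq_zero {M N R : Type} [Ring R] {f : M → N}
    {x : R[M]} (hx : mapDomain f x = 0) :
    x ∈ Submodule.span R {y | ∃ a b, f a = f b ∧ y = single a 1 - single b 1} := by
  rcases isEmpty_or_nonempty M with hM | hM
  · rw [show x = 0 by ext m; exact isEmptyElim m]; exact zero_mem _
  let g := Function.invFun f ∘ f
  have hg (a : M) : f (g a) = f a := Function.invFun_eq ⟨a, rfl⟩
  have hgx : mapDomain g x = 0 := by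
    have : mapDomain g x = mapDomain (Function.invFun f) (mapDomain f x) := by
      ext; simp [mapDomain, Finsupp.mapDomain_comp, g]
    rw [this, hx, mapDomain_zero]
  have key (y : R[M]) :
      y - mapDomain g y ∈ Submodule.span R {y | ∃ a b, f a = f b ∧ y = single a 1 - single b 1} := by
    induction y using induction_linear with
    | zero => simp
    | add y z hy hz => rw [mapDomain_add, add_sub_add_comm]; exact add_mem hy hz
    | single a r =>
      have : single a r - single (g a) r = r • (single a 1 - single (g a) 1) := by simp [smul_sub]
      rw [mapDomain_single, this]
      exact Submodule.smul_mem _ _ (Submodule.subset_span ⟨a, g a, (hg a).symm, rfl⟩)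
  simpa [hgx] using key x

end AddMonoidAlgebra

namespace Finsupp

theorem exists_eq_single_add_single_of_degree_eq_two {σ : Type} {p : σ →₀ ℕ}
    (hp : degree p = 2) : ∃ i j, p = single i 1 + single j 1 := by
  classical
  have hcard : Multiset.card (toMultiset p) = 2 := by
    rw [card_toMultiset, ← hp, degree_apply]; rfl
  obtain ⟨i, j, hij⟩ := Multiset.card_eq_two.1 hcard
  refine ⟨i, j, ?_⟩
  rw [← Finsupp.toMultiset_toFinsupp p, hij, Multiset.insert_eq_cons, ← Multiset.singleton_add,
    Multiset.toFinsupp_add, Multiset.toFinsupp_singleton, Multiset.toFinsupp_singleton]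

theorem weight_comp {σ M N : Type} [AddCommMonoid M] [AddCommMonoid N]
    (φ : M →+ N) (u : σ → M) :
    (weight (φ ∘ u) : (σ →₀ ℕ) →+ N) = φ.comp (weight u) :=
  Finsupp.addHom_ext fun i n => by simp [weight_single, map_nsmul]

theorem exists_eq_add_single {ι : Type} {f : ι →₀ ℕ} {x : ι} (hx : f x ≠ 0) :
    ∃ g, f = g + single x 1 :=
  ⟨f - single x 1, (sub_add_single_one_cancel hx).symm⟩

theorem exists_eq_add_single_add_single {ι : Type} {f : ι →₀ ℕ} {x y : ι} (hxy : x ≠ y)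
    (hx : f x ≠ 0) (hy : f y ≠ 0) : ∃ g, f = g + (single x 1 + single y 1) := by
  obtain ⟨g, rfl⟩ := exists_eq_add_single hy
  obtain ⟨g', rfl⟩ := exists_eq_add_single (f := g) (x := x)
    (by simpa [single_apply, hxy.symm] using hx)
  exact ⟨g', add_assoc _ _ _⟩

end Finsupp

open Finsupp

namespace MvPolynomial

variable {σ α K : Type}

section QuadRel

def QuadRel {M : Type} [AddCommMonoid M] (u : σ → M) (p q : σ →₀ ℕ) : Prop :=
  degree p = 2 ∧ degree q = 2 ∧ weight u p = weight u q

theorem addConGen_quadRel_le_ker_weight {M : Type} [AddCommMonoid M] (u : σ → M) :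
    addConGen (QuadRel u) ≤ AddCon.ker (weight u) :=
  AddCon.addConGen_le.2 fun _ _ h => h.2.2

theorem addConGen_quadRel_le_ker_degree {M : Type} [AddCommMonoid M] (u : σ → M) :
    addConGen (QuadRel u) ≤ AddCon.ker (degree : (σ →₀ ℕ) →+ ℕ) :=
  AddCon.addConGen_le.2 fun _ _ h => h.1.trans h.2.1.symm

theorem ker_weight_le_addConGen_quadRel_comp {M N : Type} [AddCommMonoid M] [AddCommMonoid N]
    {φ : M →+ N} (hφ : Function.Injective φ) {u : σ → M}
    (h : AddCon.ker (weight u) ≤ addConGen (QuadRel u)) :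
    AddCon.ker (weight (φ ∘ u)) ≤ addConGen (QuadRel (φ ∘ u)) := by
  have hw (p q : σ →₀ ℕ) : weight (φ ∘ u) p = weight (φ ∘ u) q ↔ weight u p = weight u q := by
    rw [weight_comp, AddMonoidHom.comp_apply, AddMonoidHom.comp_apply, hφ.eq_iff]
  have hQ : QuadRel (φ ∘ u) = QuadRel u := by
    ext p q; rw [QuadRel, QuadRel, hw]
  intro a b hab
  rw [hQ]
  exact h ((hw a b).1 hab)

theorem ker_weight_le_addConGen_quadRel_comp_equiv {τ M : Type} [AddCommMonoid M]
    (e : σ ≃ τ) {v : τ → M} (h : AddCon.ker (weight v) ≤ addConGen (QuadRel v)) :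
    AddCon.ker (weight (v ∘ e)) ≤ addConGen (QuadRel (v ∘ e)) := by
  let D : (σ →₀ ℕ) ≃+ (τ →₀ ℕ) := Finsupp.domCongr e
  have hw : weight (v ∘ e) = (weight v).comp D.toAddMonoidHom :=
    Finsupp.addHom_ext fun i n => by simp [D, weight_single]
  have hdeg (p : σ →₀ ℕ) : degree (D p) = degree p := by
    simp [D, equivMapDomain_eq_mapDomain, degree_mapDomain]
  have hQ : addConGen (QuadRel (v ∘ e)) =
      AddCon.comap D (map_add D) (addConGen (QuadRel v)) := by
    rw [AddCon.comap_addConGen_equiv]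
    congr
    ext p q
    simp only [QuadRel, hdeg, hw, AddMonoidHom.comp_apply]
    rfl
  intro a b hab
  rw [hQ, AddCon.comap_rel]
  apply h
  simpa [hw] using hab

end QuadRel

section Binomial

variable [CommRing K]

variable (K) in
noncomputable def binomialIdeal (R : (σ →₀ ℕ) → (σ →₀ ℕ) → Prop) :
    Ideal (MvPolynomial σ K) :=
  Ideal.span {f | ∃ p q, R p q ∧ f = monomial p 1 - monomial q 1}

theorem monomial_sub_monomial_mem_binomialIdeal {R : (σ →₀ ℕ) → (σ →₀ ℕ) → Prop}
    {a b : σ →₀ ℕ} (h : addConGen R a b) :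
    monomial a (1 : K) - monomial b 1 ∈ binomialIdeal K R := by
  have monomial_add (p q : σ →₀ ℕ) : monomial (p + q) (1 : K) = monomial p 1 * monomial q 1 := by
    rw [monomial_mul, one_mul]
  induction h with
  | of p q hpq => exact Ideal.subset_span ⟨p, q, hpq, rfl⟩
  | refl => rw [sub_self]; exact zero_mem _
  | symm _ ih => simpa using neg_mem ih
  | trans _ _ ih₁ ih₂ => simpa using add_mem ih₁ ih₂
  | @add w x y z _ _ ih₁ ih₂ =>
    have key : monomial (w + y) (1 : K) - monomial (x + z) 1 =
        monomial y 1 * (monomial w 1 - monomial x 1) +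
          monomial x 1 * (monomial y 1 - monomial z 1) := by
      rw [monomial_add, monomial_add]; ring
    rw [key]
    exact add_mem (Ideal.mul_mem_left _ _ ih₁) (Ideal.mul_mem_left _ _ ih₂)

theorem addConGen_of_monomial_sub_monomial_mem_binomialIdeal [Nontrivial K]
    {R : (σ →₀ ℕ) → (σ →₀ ℕ) → Prop} {a b : σ →₀ ℕ}
    (h : monomial a (1 : K) - monomial b 1 ∈ binomialIdeal K R) : addConGen R a b := by
  let φ : MvPolynomial σ K →+* AddMonoidAlgebra K (addConGen R).Quotient :=
    AddMonoidAlgebra.mapDomainRingHom K (addConGen R).mk'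
  have φ_monomial (p : σ →₀ ℕ) :
      φ (monomial p 1) = AddMonoidAlgebra.single (p : (addConGen R).Quotient) 1 :=
    AddMonoidAlgebra.mapDomain_single
  have hker : binomialIdeal K R ≤ RingHom.ker φ := by
    refine Ideal.span_le.2 ?_
    rintro _ ⟨p, q, hpq, rfl⟩
    rw [SetLike.mem_coe, RingHom.mem_ker, map_sub, φ_monomial, φ_monomial,
      (AddCon.eq _).2 (AddConGen.Rel.of p q hpq), sub_self]
  have hab := hker h
  rw [RingHom.mem_ker, map_sub, φ_monomial, φ_monomial, sub_eq_zero] at hab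
  exact (AddCon.eq _).1 (AddMonoidAlgebra.single_left_injective one_ne_zero hab)

end Binomial

section Toric

variable [CommRing K]

variable (K) in
noncomputable def toricIdeal (u : σ → α →₀ ℕ) :
    Ideal (MvPolynomial σ K) :=
  RingHom.ker (aeval fun i => monomial (u i) (1 : K))

theorem aeval_monomial_monomial (u : σ → α →₀ ℕ) (a : σ →₀ ℕ) (r : K) :
    aeval (fun i => monomial (u i) (1 : K)) (monomial a r) = monomial (weight u a) r := by
  rw [aeval_monomial, weight_apply]
  simp [Finsupp.prod, monomial_pow, ← monomial_sum_one, Finsupp.sum, algebraMap_eq,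
    C_mul_monomial]

theorem aeval_monomial_eq_mapDomain (u : σ → α →₀ ℕ) (f : MvPolynomial σ K) :
    aeval (fun i => monomial (u i) (1 : K)) f = AddMonoidAlgebra.mapDomain (weight u) f := by
  induction f using MvPolynomial.induction_on' with
  | monomial a r =>
    rw [aeval_monomial_monomial, ← single_eq_monomial, ← single_eq_monomial,
      AddMonoidAlgebra.mapDomain_single]
  | add f g hf hg => rw [map_add, hf, hg, AddMonoidAlgebra.mapDomain_add]

theorem monomial_sub_monomial_mem_toricIdeal_iff [Nontrivial K] {u : σ → α →₀ ℕ}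
    {a b : σ →₀ ℕ} :
    monomial a (1 : K) - monomial b 1 ∈ toricIdeal K u ↔ weight u a = weight u b := by
  rw [toricIdeal, RingHom.mem_ker, map_sub, aeval_monomial_monomial, aeval_monomial_monomial,
    sub_eq_zero]
  exact (monomial_left_injective one_ne_zero).eq_iff

theorem toricIdeal_eq_binomialIdeal [Nontrivial K] (u : σ → α →₀ ℕ) :
    toricIdeal K u = binomialIdeal K (AddCon.ker (weight u)) := by
  refine le_antisymm (fun f hf => ?_) (Ideal.span_le.2 ?_)
  · have hf' : AddMonoidAlgebra.mapDomain (weight u) f = 0 := by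
      rw [toricIdeal, RingHom.mem_ker] at hf
      rw [← hf, aeval_monomial_eq_mapDomain]
    refine Submodule.span_le_restrictScalars K _ _ (Submodule.span_mono ?_
      (AddMonoidAlgebra.mem_span_single_sub_single_of_mapDomain_eq_zero hf'))
    rintro _ ⟨a, b, hab, rfl⟩
    exact ⟨a, b, hab, rfl⟩
  · rintro _ ⟨a, b, hab, rfl⟩
    exact monomial_sub_monomial_mem_toricIdeal_iff.2 hab

theorem X_mul_X_eq_monomial (i j : σ) :
    (X i * X j : MvPolynomial σ K) = monomial (single i 1 + single j 1) 1 := by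
  rw [X, X, monomial_mul, one_mul]

theorem exists_X_mul_X_sub_X_mul_X_of_degree_eq_two {p q : σ →₀ ℕ}
    (hp : degree p = 2) (hq : degree q = 2) :
    ∃ i j k l, (monomial p 1 - monomial q 1 : MvPolynomial σ K) = X i * X j - X k * X l := by
  obtain ⟨i, j, rfl⟩ := exists_eq_single_add_single_of_degree_eq_two hp
  obtain ⟨k, l, rfl⟩ := exists_eq_single_add_single_of_degree_eq_two hq
  exact ⟨i, j, k, l, by rw [X_mul_X_eq_monomial, X_mul_X_eq_monomial]⟩

end Toric

theorem generatedByQuadBinomials_toricIdeal_iff [Field K] (u : σ → α →₀ ℕ) :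
    GeneratedByQuadBinomials (toricIdeal K u) ↔
      AddCon.ker (weight u) ≤ addConGen (QuadRel u) := by
  constructor
  · rintro ⟨G, hG, hspan⟩ a b hab
    have hG_le : Ideal.span G ≤ binomialIdeal K (QuadRel u) := by
      refine Ideal.span_le.2 fun g hg => ?_
      obtain ⟨i, j, k, l, rfl⟩ := hG g hg
      have hmem : X i * X j - X k * X l ∈ toricIdeal K u := hspan ▸ Ideal.subset_span hg
      rw [X_mul_X_eq_monomial, X_mul_X_eq_monomial] at hmem ⊢
      exact Ideal.subset_span
        ⟨_, _, ⟨by simp, by simp, monomial_sub_monomial_mem_toricIdeal_iff.1 hmem⟩, rfl⟩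
    refine addConGen_of_monomial_sub_monomial_mem_binomialIdeal (K := K) (hG_le ?_)
    rw [hspan]
    exact monomial_sub_monomial_mem_toricIdeal_iff.2 hab
  · intro h
    refine ⟨{f | ∃ p q, QuadRel u p q ∧ f = monomial p 1 - monomial q 1}, ?_, le_antisymm ?_ ?_⟩
    · rintro _ ⟨p, q, ⟨hp, hq, -⟩, rfl⟩
      exact exists_X_mul_X_sub_X_mul_X_of_degree_eq_two hp hq
    · refine Ideal.span_le.2 ?_
      rintro _ ⟨p, q, ⟨-, -, hpq⟩, rfl⟩
      exact monomial_sub_monomial_mem_toricIdeal_iff.2 hpq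
    · rw [toricIdeal_eq_binomialIdeal]
      refine Ideal.span_le.2 ?_
      rintro _ ⟨a, b, hab, rfl⟩
      exact monomial_sub_monomial_mem_binomialIdeal (h hab)

end MvPolynomial

namespace SeriesExtension

variable {β α : Type}

/-- The weights of the series extension of `u` at `c` by a new coordinate `e`: the variable
`inl B` stands for the basis `B ∪ {e}`, and `inr B` for `B ∪ {c}`, which requires `c ∉ B`,
i.e. `u B c = 0`. -/
noncomputable def weights (u : β → α →₀ ℕ) (c e : α) : β ⊕ {B // u B c = 0} → α →₀ ℕ :=
  Sum.elim (fun B => u B + single e 1) (fun B => u B.1 + single c 1)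

noncomputable def collapse (u : β → α →₀ ℕ) (c : α) :
    (β ⊕ {B // u B c = 0} →₀ ℕ) →+ (β →₀ ℕ) :=
  mapDomain.addMonoidHom (Sum.elim id Subtype.val)

noncomputable def yDegree (u : β → α →₀ ℕ) (c : α) : (β ⊕ {B // u B c = 0} →₀ ℕ) →+ ℕ :=
  weight (Sum.elim 1 0)

noncomputable def zDegree (u : β → α →₀ ℕ) (c : α) : (β ⊕ {B // u B c = 0} →₀ ℕ) →+ ℕ :=
  weight (Sum.elim 0 1)

noncomputable def avoidDegree (u : β → α →₀ ℕ) (c : α) : (β →₀ ℕ) →+ ℕ :=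
  weight fun B => if u B c = 0 then 1 else 0

variable {u : β → α →₀ ℕ} {c e : α}

theorem weight_weights (a : β ⊕ {B // u B c = 0} →₀ ℕ) :
    weight (weights u c e) a = weight u (collapse u c a) + yDegree u c a • single e 1
      + zDegree u c a • single c 1 := by
  induction a using Finsupp.induction_linear with
  | zero => simp
  | add a b ha hb => simp only [map_add, ha, hb, add_smul]; abel
  | single x n => cases x <;> simp [weights, collapse, yDegree, zDegree, weight_single, smul_add]

theorem degree_collapse (a : β ⊕ {B // u B c = 0} →₀ ℕ) : degree (collapse u c a) = degree a :=
  degree_mapDomain _ _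

theorem yDegree_add_zDegree (a : β ⊕ {B // u B c = 0} →₀ ℕ) :
    yDegree u c a + zDegree u c a = degree a := by
  induction a using Finsupp.induction_linear with
  | zero => simp
  | add a b ha hb => simp only [map_add]; omega
  | single x n => cases x <;> simp [yDegree, zDegree, weight_single]

theorem weight_weights_apply_eq_yDegree (hce : c ≠ e) (he : ∀ B, u B e = 0)
    (a : β ⊕ {B // u B c = 0} →₀ ℕ) : weight (weights u c e) a e = yDegree u c a := by
  rw [weight_weights]
  simp [weight_apply, Finsupp.sum, he, hce]

theorem degree_weight_weights {r : ℕ} (hr : ∀ B, degree (u B) = r)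
    (a : β ⊕ {B // u B c = 0} →₀ ℕ) : degree (weight (weights u c e) a) = (r + 1) * degree a := by
  induction a using Finsupp.induction_linear with
  | zero => simp
  | add a b ha hb => simp only [map_add, ha, hb, mul_add]
  | single x n => cases x <;> simp [weights, weight_single, hr] <;> ring

theorem zDegree_eq_of_weight_weights_eq (hce : c ≠ e) (he : ∀ B, u B e = 0) {r : ℕ}
    (hr : ∀ B, degree (u B) = r) {a b : β ⊕ {B // u B c = 0} →₀ ℕ}
    (hab : weight (weights u c e) a = weight (weights u c e) b) :
    zDegree u c a = zDegree u c b := by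
  have hy : yDegree u c a = yDegree u c b := by
    rw [← weight_weights_apply_eq_yDegree hce he, ← weight_weights_apply_eq_yDegree hce he, hab]
  have hdeg : degree a = degree b := by
    have := congrArg degree hab
    rw [degree_weight_weights hr, degree_weight_weights hr] at this
    exact Nat.eq_of_mul_eq_mul_left r.succ_pos this
  have := yDegree_add_zDegree a
  have := yDegree_add_zDegree b
  omega

theorem weight_collapse_eq_of_weight_weights_eq (hce : c ≠ e) (he : ∀ B, u B e = 0) {r : ℕ}
    (hr : ∀ B, degree (u B) = r) {a b : β ⊕ {B // u B c = 0} →₀ ℕ}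
    (hab : weight (weights u c e) a = weight (weights u c e) b) :
    weight u (collapse u c a) = weight u (collapse u c b) := by
  have hy : yDegree u c a = yDegree u c b := by
    rw [← weight_weights_apply_eq_yDegree hce he, ← weight_weights_apply_eq_yDegree hce he, hab]
  have hz := zDegree_eq_of_weight_weights_eq hce he hr hab
  rw [weight_weights, weight_weights, hy, hz] at hab
  exact add_right_cancel (add_right_cancel hab)

theorem weight_weights_eq {a b : β ⊕ {B // u B c = 0} →₀ ℕ}
    (hw : weight u (collapse u c a) = weight u (collapse u c b)) (hdeg : degree a = degree b)
    (hz : zDegree u c a = zDegree u c b) :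
    weight (weights u c e) a = weight (weights u c e) b := by
  have hy : yDegree u c a = yDegree u c b := by
    have := yDegree_add_zDegree a
    have := yDegree_add_zDegree b
    omega
  rw [weight_weights, weight_weights, hw, hy, hz]

theorem avoidDegree_add_weight_apply (hc : ∀ B, u B c ≤ 1) (γ : β →₀ ℕ) :
    avoidDegree u c γ + weight u γ c = degree γ := by
  induction γ using Finsupp.induction_linear with
  | zero => simp
  | add γ δ hγ hδ => simp only [map_add, Finsupp.add_apply]; omega
  | single B n =>
    rcases Nat.le_one_iff_eq_zero_or_eq_one.1 (hc B) with h | h <;>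
      simp [avoidDegree, weight_single, h]

theorem zDegree_le_avoidDegree_collapse (a : β ⊕ {B // u B c = 0} →₀ ℕ) :
    zDegree u c a ≤ avoidDegree u c (collapse u c a) := by
  induction a using Finsupp.induction_linear with
  | zero => simp
  | add a b ha hb => simp only [map_add]; omega
  | single x n =>
    rcases x with B | ⟨B, hB⟩
    · simp [zDegree, avoidDegree, collapse, weight_single]
    · simp [zDegree, avoidDegree, collapse, weight_single, hB]

theorem avoidDegree_eq_of_addConGen (hc : ∀ B, u B c ≤ 1) {γ γ' : β →₀ ℕ}
    (h : addConGen (QuadRel u) γ γ') : avoidDegree u c γ = avoidDegree u c γ' := by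
  have hw : weight u γ c = weight u γ' c := by
    rw [(addConGen_quadRel_le_ker_weight u h : weight u γ = weight u γ')]
  have hd : degree γ = degree γ' := addConGen_quadRel_le_ker_degree u h
  have := avoidDegree_add_weight_apply hc γ
  have := avoidDegree_add_weight_apply hc γ'
  omega

theorem exists_collapse_eq_zDegree_eq {γ : β →₀ ℕ} {q : ℕ} (hq : q ≤ avoidDegree u c γ) :
    ∃ a, collapse u c a = γ ∧ zDegree u c a = q := by
  induction γ using Finsupp.induction_linear generalizing q with
  | zero => exact ⟨0, map_zero _, by rw [map_zero]; simp at hq; omega⟩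
  | add γ δ hγ hδ =>
    rw [map_add] at hq
    obtain ⟨a, ha, ha'⟩ := hγ (min_le_right q (avoidDegree u c γ))
    obtain ⟨b, hb, hb'⟩ := hδ (q := q - min q (avoidDegree u c γ)) (by omega)
    exact ⟨a + b, by rw [map_add, ha, hb], by rw [map_add, ha', hb']; omega⟩
  | single B n =>
    by_cases hB : u B c = 0
    · simp only [avoidDegree, weight_single, hB, if_true, smul_eq_mul, mul_one] at hq
      refine ⟨single (.inl B) (n - q) + single (.inr ⟨B, hB⟩) q, ?_, ?_⟩
      · simp only [map_add, collapse, mapDomain.addMonoidHom_apply, mapDomain_single,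
          Sum.elim_inl, Sum.elim_inr, id]
        rw [← single_add, Nat.sub_add_cancel hq]
      · simp [-single_tsub, zDegree, weight_single]
    · simp only [avoidDegree, weight_single, hB, if_false, smul_zero, Nat.le_zero] at hq
      exact ⟨single (.inl B) n, by simp [collapse], by simp [zDegree, weight_single, hq]⟩

theorem collapse_apply (a : β ⊕ {B // u B c = 0} →₀ ℕ) (B : β) :
    collapse u c a B = a (.inl B) + if h : u B c = 0 then a (.inr ⟨B, h⟩) else 0 := by
  induction a using Finsupp.induction_linear with
  | zero => simp
  | add a b ha hb =>
    simp only [map_add, Finsupp.add_apply, ha, hb]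
    split_ifs <;> ring
  | single x n =>
    rcases x with B' | ⟨B', hB'⟩
    · by_cases h : B' = B <;> simp [collapse, h]
    · by_cases h : B' = B
      · subst h; simp [collapse, hB']
      · simp [collapse, h]

theorem apply_inr_eq_zero_of_zDegree_eq_zero {a : β ⊕ {B // u B c = 0} →₀ ℕ}
    (ha : zDegree u c a = 0) (p : {B // u B c = 0}) : a (.inr p) = 0 := by
  have : a (.inr p) ≤ zDegree u c a := le_weight _ (s := .inr p) one_ne_zero a
  omega

theorem exists_apply_inr_ne_zero {a : β ⊕ {B // u B c = 0} →₀ ℕ} (ha : zDegree u c a ≠ 0) :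
    ∃ p, a (.inr p) ≠ 0 := by
  by_contra! h
  refine ha (Finset.sum_eq_zero fun x _ => ?_)
  rcases x with B | p
  · simp
  · simp [h p]

theorem weight_weights_single_add_single (B : β) (p : {B // u B c = 0}) :
    weight (weights u c e) (single (.inl B) 1 + single (.inr p) 1) =
      u B + u p + single e 1 + single c 1 := by
  simp [weights, weight_single]
  abel

theorem exists_addConGen_apply_inr_ne_zero {b : β ⊕ {B // u B c = 0} →₀ ℕ}
    {p : {B // u B c = 0}} (hb : zDegree u c b ≠ 0) (hp : collapse u c b p.1 ≠ 0) :
    ∃ b', addConGen (QuadRel (weights u c e)) b b' ∧ collapse u c b' = collapse u c b ∧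
      zDegree u c b' = zDegree u c b ∧ b' (.inr p) ≠ 0 := by
  by_cases hbp : b (.inr p) = 0
  swap
  · exact ⟨b, AddConGen.Rel.refl b, rfl, rfl, hbp⟩
  have hB : b (.inl p.1) ≠ 0 := by simpa [collapse_apply, p.2, hbp] using hp
  obtain ⟨p', hp'⟩ := exists_apply_inr_ne_zero hb
  obtain ⟨b₀, rfl⟩ := exists_eq_add_single_add_single Sum.inl_ne_inr hB hp'
  -- the move `y_p z_{p'} ↦ y_{p'} z_p`
  refine ⟨b₀ + (single (.inl p'.1) 1 + single (.inr p) 1), ?_, ?_, ?_, ?_⟩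
  · refine AddConGen.Rel.add (AddConGen.Rel.refl b₀) (AddConGen.Rel.of _ _ ⟨?_, ?_, ?_⟩)
    · simp
    · simp
    · rw [weight_weights_single_add_single, weight_weights_single_add_single]; abel
  · simp only [collapse, mapDomain.addMonoidHom_apply, mapDomain_add, mapDomain_single,
      Sum.elim_inl, Sum.elim_inr, id]
    abel
  · simp [zDegree, weight_single]
  · simp

theorem addConGen_of_collapse_eq {a b : β ⊕ {B // u B c = 0} →₀ ℕ}
    (hab : collapse u c a = collapse u c b) (hz : zDegree u c a = zDegree u c b) :
    addConGen (QuadRel (weights u c e)) a b := by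
  induction hn : zDegree u c a generalizing a b with
  | zero =>
    have hb := hz ▸ hn
    suffices a = b from this ▸ AddConGen.Rel.refl a
    ext (B | p)
    · have := congrArg (· B) hab
      simpa [collapse_apply, apply_inr_eq_zero_of_zDegree_eq_zero hn,
        apply_inr_eq_zero_of_zDegree_eq_zero hb] using this
    · rw [apply_inr_eq_zero_of_zDegree_eq_zero hn, apply_inr_eq_zero_of_zDegree_eq_zero hb]
  | succ n ih =>
    obtain ⟨p, hp⟩ := exists_apply_inr_ne_zero (a := a) (by omega)
    have hpb : collapse u c b p.1 ≠ 0 := by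
      rw [← hab, collapse_apply, dif_pos p.2, Subtype.coe_eta]; omega
    obtain ⟨b', hbb', hb'c, hb'z, hb'p⟩ :=
      exists_addConGen_apply_inr_ne_zero (e := e) (by omega) hpb
    obtain ⟨a₀, rfl⟩ := exists_eq_add_single hp
    obtain ⟨b₀, rfl⟩ := exists_eq_add_single hb'p
    have hz₁ : zDegree u c (single (.inr p) 1) = 1 := by simp [zDegree, weight_single]
    have h₀ : addConGen (QuadRel (weights u c e)) a₀ b₀ := by
      refine ih (add_right_cancel (b := collapse u c (single (.inr p) 1)) ?_) ?_ ?_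
      · rw [← map_add, ← map_add, hb'c, hab]
      · have := hb'z.trans hz.symm
        rw [map_add, map_add, hz₁] at this; omega
      · rw [map_add, hz₁] at hn; omega
    exact AddConGen.Rel.trans (AddConGen.Rel.add h₀ (AddConGen.Rel.refl _))
      (AddConGen.Rel.symm hbb')

theorem addConGen_of_addConGen_collapse (hc : ∀ B, u B c ≤ 1) {γ γ' : β →₀ ℕ}
    (h : addConGen (QuadRel u) γ γ') {a b : β ⊕ {B // u B c = 0} →₀ ℕ}
    (ha : collapse u c a = γ) (hb : collapse u c b = γ') (hz : zDegree u c a = zDegree u c b) :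
    addConGen (QuadRel (weights u c e)) a b := by
  have hlift {δ δ' : β →₀ ℕ} (hδ : addConGen (QuadRel u) δ δ') {a : β ⊕ {B // u B c = 0} →₀ ℕ}
      (ha : collapse u c a = δ) : ∃ b, collapse u c b = δ' ∧ zDegree u c b = zDegree u c a := by
    refine exists_collapse_eq_zDegree_eq ?_
    rw [← avoidDegree_eq_of_addConGen hc hδ, ← ha]
    exact zDegree_le_avoidDegree_collapse a
  induction h generalizing a b with
  | of p q hpq =>
    obtain ⟨b₀, hb₀, hb₀z⟩ := hlift (AddConGen.Rel.of p q hpq) ha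
    have hquad : QuadRel (weights u c e) a b₀ := by
      refine ⟨?_, ?_, weight_weights_eq ?_ ?_ hb₀z.symm⟩
      · rw [← degree_collapse, ha, hpq.1]
      · rw [← degree_collapse, hb₀, hpq.2.1]
      · rw [ha, hb₀, hpq.2.2]
      · rw [← degree_collapse, ha, hpq.1, ← degree_collapse, hb₀, hpq.2.1]
    exact AddConGen.Rel.trans (AddConGen.Rel.of _ _ hquad)
      (addConGen_of_collapse_eq (hb₀.trans hb.symm) (hb₀z.trans hz))
  | refl => exact addConGen_of_collapse_eq (ha.trans hb.symm) hz
  | symm _ ih => exact AddConGen.Rel.symm (ih hb ha hz.symm)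
  | trans h₁ _ ih₁ ih₂ =>
    obtain ⟨m, hm, hmz⟩ := hlift h₁ ha
    exact AddConGen.Rel.trans (ih₁ ha hm hmz.symm) (ih₂ hm hb (hmz.trans hz))
  | @add w x y z h₁ h₂ ih₁ ih₂ =>
    have haz : zDegree u c a ≤ avoidDegree u c w + avoidDegree u c y := by
      rw [← map_add, ← ha]; exact zDegree_le_avoidDegree_collapse a
    obtain ⟨a₁, ha₁, ha₁z⟩ := exists_collapse_eq_zDegree_eq (u := u) (c := c)
      (min_le_right (zDegree u c a) (avoidDegree u c w))
    obtain ⟨a₂, ha₂, ha₂z⟩ := exists_collapse_eq_zDegree_eq (u := u) (c := c)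
      (γ := y) (q := zDegree u c a - min (zDegree u c a) (avoidDegree u c w)) (by omega)
    obtain ⟨b₁, hb₁, hb₁z⟩ := hlift h₁ ha₁
    obtain ⟨b₂, hb₂, hb₂z⟩ := hlift h₂ ha₂
    have h₁₂ : addConGen (QuadRel (weights u c e)) (a₁ + a₂) (b₁ + b₂) :=
      AddConGen.Rel.add (ih₁ ha₁ hb₁ hb₁z.symm) (ih₂ ha₂ hb₂ hb₂z.symm)
    refine AddConGen.Rel.trans (addConGen_of_collapse_eq ?_ ?_)
      (AddConGen.Rel.trans h₁₂ (addConGen_of_collapse_eq ?_ ?_))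
    · rw [map_add, ha₁, ha₂, ha]
    · rw [map_add]; omega
    · rw [map_add, hb₁, hb₂, hb]
    · rw [map_add]; omega

theorem ker_weight_le_addConGen_quadRel_weights (hc : ∀ B, u B c ≤ 1) (hce : c ≠ e)
    (he : ∀ B, u B e = 0) {r : ℕ} (hr : ∀ B, degree (u B) = r)
    (h : AddCon.ker (weight u) ≤ addConGen (QuadRel u)) :
    AddCon.ker (weight (weights u c e)) ≤ addConGen (QuadRel (weights u c e)) := fun _ _ hab =>
  addConGen_of_addConGen_collapse hc (h (weight_collapse_eq_of_weight_weights_eq hce he hr hab))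
    rfl rfl (zDegree_eq_of_weight_weights_eq hce he hr hab)

end SeriesExtension

theorem matroidToricIdeal_eq_toricIdeal (K : Type) [Field K] {α : Type} [Fintype α]
    [DecidableEq α] (N : Matroid α) :
    matroidToricIdeal K N =
      toricIdeal K fun B : {B : Finset α // N.IsBase ↑B} => ∑ l ∈ B.1, single l 1 := by
  simp only [matroidToricIdeal, matroidToricMap, toricIdeal, monomial_sum_one]
  rfl

namespace Fin

theorem last_notMem_map_castSuccEmb {d : ℕ} (B : Finset (Fin d)) :
    Fin.last d ∉ B.map Fin.castSuccEmb := by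
  simp [Fin.castSucc_ne_last]

theorem castSucc_notMem_map_castSuccEmb {d : ℕ} {c : Fin d} {B : Finset (Fin d)} (hc : c ∉ B) :
    Fin.castSucc c ∉ B.map Fin.castSuccEmb := by
  simpa using hc

theorem sum_single_insert_map_castSuccEmb {d : ℕ} (x : Fin (d + 1)) (B : Finset (Fin d))
    (hx : x ∉ B.map Fin.castSuccEmb) :
    ∑ l ∈ insert x (B.map Fin.castSuccEmb), single l 1 =
      mapDomain Fin.castSucc (∑ l ∈ B, single l 1) + single x 1 := by
  rw [Finset.sum_insert hx, Finset.sum_map, mapDomain_finsetSum, add_comm (single x 1)]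
  simp [mapDomain_single]

end Fin

namespace Matroid

variable {d : ℕ} {M : Matroid (Fin d)} {c : Fin d} {M' : Matroid (Fin (d + 1))}

def IsSeriesExtension (M : Matroid (Fin d)) (c : Fin d) (M' : Matroid (Fin (d + 1))) : Prop :=
  ∀ S : Set (Fin (d + 1)), M'.IsBase S ↔
    ((∃ B : Set (Fin d), M.IsBase B ∧ S = Fin.castSucc '' B ∪ {Fin.last d}) ∨
     (∃ B : Set (Fin d), M.IsBase B ∧ c ∉ B ∧ S = Fin.castSucc '' B ∪ {Fin.castSucc c}))

noncomputable def castSuccBasisWeight (M : Matroid (Fin d)) :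
    {B : Finset (Fin d) // M.IsBase ↑B} → Fin (d + 1) →₀ ℕ :=
  mapDomain.addMonoidHom Fin.castSucc ∘ fun B => ∑ l ∈ B.1, single l 1

theorem castSuccBasisWeight_apply_castSucc (B : {B : Finset (Fin d) // M.IsBase ↑B})
    (x : Fin d) : castSuccBasisWeight M B x.castSucc = if x ∈ B.1 then 1 else 0 := by
  simp [castSuccBasisWeight, Finset.sum_apply', single_apply]

theorem castSuccBasisWeight_apply_castSucc_le_one (B : {B : Finset (Fin d) // M.IsBase ↑B})
    (x : Fin d) : castSuccBasisWeight M B x.castSucc ≤ 1 := by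
  rw [castSuccBasisWeight_apply_castSucc]
  split_ifs <;> omega

theorem castSuccBasisWeight_apply_castSucc_eq_zero_iff (B : {B : Finset (Fin d) // M.IsBase ↑B})
    (x : Fin d) : castSuccBasisWeight M B x.castSucc = 0 ↔ x ∉ B.1 := by
  simp [castSuccBasisWeight_apply_castSucc]

theorem castSuccBasisWeight_apply_last (B : {B : Finset (Fin d) // M.IsBase ↑B}) :
    castSuccBasisWeight M B (Fin.last d) = 0 :=
  mapDomain_of_notMem_range _ _ fun ⟨x, hx⟩ => (Fin.castSucc_lt_last x).ne hx

theorem degree_castSuccBasisWeight (B : {B : Finset (Fin d) // M.IsBase ↑B}) :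
    degree (castSuccBasisWeight M B) = M.eRank.toNat := by
  have := B.2.encard_eq_eRank
  rw [Set.encard_coe_eq_coe_finsetCard] at this
  simp [castSuccBasisWeight, ← this]

variable (hM' : IsSeriesExtension M c M')

include hM'

noncomputable def seriesBase :
    {B : Finset (Fin d) // M.IsBase ↑B} ⊕ {B // castSuccBasisWeight M B c.castSucc = 0} →
      {T : Finset (Fin (d + 1)) // M'.IsBase ↑T}
  | .inl B => ⟨insert (Fin.last d) (B.1.map Fin.castSuccEmb),
      (hM' _).2 (.inl ⟨B.1, B.2, by simp⟩)⟩
  | .inr B => ⟨insert c.castSucc (B.1.1.map Fin.castSuccEmb),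
      (hM' _).2 (.inr ⟨B.1.1, B.1.2,
        by simpa using (castSuccBasisWeight_apply_castSucc_eq_zero_iff _ _).1 B.2, by simp⟩)⟩

theorem sum_single_seriesBase
    (x : {B : Finset (Fin d) // M.IsBase ↑B} ⊕ {B // castSuccBasisWeight M B c.castSucc = 0}) :
    ∑ l ∈ (seriesBase hM' x).1, single l 1 =
      SeriesExtension.weights (castSuccBasisWeight M) c.castSucc (Fin.last d) x := by
  rcases x with B | B
  · exact Fin.sum_single_insert_map_castSuccEmb _ _ (Fin.last_notMem_map_castSuccEmb _)
  · exact Fin.sum_single_insert_map_castSuccEmb _ _ (Fin.castSucc_notMem_map_castSuccEmb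
      ((castSuccBasisWeight_apply_castSucc_eq_zero_iff _ _).1 B.2))

theorem seriesBase_injective : Function.Injective (seriesBase hM') := by
  rintro (B | B) (B' | B') h <;> simp only [seriesBase, Subtype.mk.injEq] at h
  · have := congrArg (·.erase (Fin.last d)) h
    simp only [Finset.erase_insert (Fin.last_notMem_map_castSuccEmb _), Finset.map_inj] at this
    exact congrArg _ (Subtype.ext this)
  · have := h ▸ Finset.mem_insert_self (Fin.last d) _
    simp [(Fin.castSucc_lt_last c).ne'] at this
  · have : Fin.last d ∈ insert c.castSucc (B.1.1.map Fin.castSuccEmb) := by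
      rw [h]; exact Finset.mem_insert_self _ _
    simp [(Fin.castSucc_lt_last c).ne'] at this
  · have hnot (B : {B // castSuccBasisWeight M B c.castSucc = 0}) :=
      Fin.castSucc_notMem_map_castSuccEmb
        ((castSuccBasisWeight_apply_castSucc_eq_zero_iff _ _).1 B.2)
    have := congrArg (·.erase c.castSucc) h
    simp only [Finset.erase_insert (hnot B), Finset.erase_insert (hnot B'), Finset.map_inj] at this
    exact congrArg _ (Subtype.ext (Subtype.ext this))

theorem seriesBase_surjective : Function.Surjective (seriesBase hM') := by
  rintro ⟨T, hT⟩
  rcases (hM' _).1 hT with ⟨B, hB, hTB⟩ | ⟨B, hB, hcB, hTB⟩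
  · refine ⟨.inl ⟨B.toFinite.toFinset, by simpa using hB⟩, Subtype.ext (Finset.coe_injective ?_)⟩
    simp [seriesBase, hTB]
  · refine ⟨.inr ⟨⟨B.toFinite.toFinset, by simpa using hB⟩,
      (castSuccBasisWeight_apply_castSucc_eq_zero_iff _ _).2 (by simpa using hcB)⟩,
      Subtype.ext (Finset.coe_injective ?_)⟩
    simp [seriesBase, hTB]

noncomputable def seriesBaseEquiv :
    {B : Finset (Fin d) // M.IsBase ↑B} ⊕ {B // castSuccBasisWeight M B c.castSucc = 0} ≃
      {T : Finset (Fin (d + 1)) // M'.IsBase ↑T} :=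
  Equiv.ofBijective _ ⟨seriesBase_injective hM', seriesBase_surjective hM'⟩

theorem sum_single_eq_weights_comp_seriesBaseEquiv_symm :
    (fun T : {T : Finset (Fin (d + 1)) // M'.IsBase ↑T} => ∑ l ∈ T.1, single l 1) =
      SeriesExtension.weights (castSuccBasisWeight M) c.castSucc (Fin.last d) ∘
        (seriesBaseEquiv hM').symm := by
  funext T
  rw [Function.comp_apply, ← sum_single_seriesBase hM']
  exact congrArg (fun T => ∑ l ∈ T.1, single l 1) ((seriesBaseEquiv hM').apply_symm_apply T).symm

end Matroid

theorem statement6_general (K : Type) [Field K] {d : ℕ}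
    (M : Matroid (Fin d)) (c : Fin d)
    (M' : Matroid (Fin (d + 1)))
    (hM' : ∀ S : Set (Fin (d + 1)), M'.IsBase S ↔
      ((∃ B : Set (Fin d), M.IsBase B ∧ S = Fin.castSucc '' B ∪ {Fin.last d}) ∨
       (∃ B : Set (Fin d), M.IsBase B ∧ c ∉ B ∧
          S = Fin.castSucc '' B ∪ {Fin.castSucc c})))
    (h : GeneratedByQuadBinomials (matroidToricIdeal K M)) :
    GeneratedByQuadBinomials (matroidToricIdeal K M') := by
  replace hM' : Matroid.IsSeriesExtension M c M' := hM'
  rw [matroidToricIdeal_eq_toricIdeal, generatedByQuadBinomials_toricIdeal_iff] at h ⊢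
  rw [Matroid.sum_single_eq_weights_comp_seriesBaseEquiv_symm hM']
  have hM := ker_weight_le_addConGen_quadRel_comp (φ := mapDomain.addMonoidHom Fin.castSucc)
    (mapDomain_injective (Fin.castSucc_injective d)) h
  exact ker_weight_le_addConGen_quadRel_comp_equiv _
    (SeriesExtension.ker_weight_le_addConGen_quadRel_weights
      (fun B => Matroid.castSuccBasisWeight_apply_castSucc_le_one B c) (Fin.castSucc_lt_last c).ne
      Matroid.castSuccBasisWeight_apply_last Matroid.degree_castSuccBasisWeight hM)

/-- If the toric ideal of `M` is generated by quadratic binomials, then so is the toric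
ideal of the series extension `M +_c (d+1)`, the matroid on `{1, …, d+1}` whose bases are
`{B ∪ {d+1} : B ∈ B(M)} ∪ {B ∪ {c} : c ∉ B ∈ B(M)}`. -/
theorem statement6 (K : Type) [Field K] {d : ℕ}
    (M : Matroid (Fin d)) (hE : M.E = Set.univ) (c : Fin d)
    (M' : Matroid (Fin (d + 1))) (hE' : M'.E = Set.univ)
    (hM' : ∀ S : Set (Fin (d + 1)), M'.IsBase S ↔
      ((∃ B : Set (Fin d), M.IsBase B ∧ S = Fin.castSucc '' B ∪ {Fin.last d}) ∨
       (∃ B : Set (Fin d), M.IsBase B ∧ c ∉ B ∧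
          S = Fin.castSucc '' B ∪ {Fin.castSucc c})))
    (h : GeneratedByQuadBinomials (matroidToricIdeal K M)) :
    GeneratedByQuadBinomials (matroidToricIdeal K M') :=
  statement6_general K M c M' hM' h
end

section
/- In the setting of the toric fiber product construction for two matroids M₁ (on [d₁], bases B_1,…,B_{n₁}, with c₁ ∉ B_j iff j ∈ [γ₁]) and M₂ (on [d₂], bases D_1,…,D_{n₂}, with c₂ ∉ D_k iff k ∈ [γ₂]), let f = ∏_{l=1}^{u} x^{i_l}_{j¹_l} − ∏_{l=1}^{u} x^{i_l}_{j²_l} be a homogeneous binomial in the toric ideal J_{D̃_{M₁}}, and let k = (k_1,…,k_u) with k_l ∈ [β_{i_l}], where (β_1,β_2) = (γ₂,n₂). Then the binomial f_k = ∏_{l=1}^{u} z^{i_l}_{j¹_l k_l} − ∏_{l=1}^{u} z^{i_l}_{j²_l k_l} lies in the toric ideal J_{D̃}. -/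
/-!
Every variable `z^i_{jk}` is sent by the toric map of `D̃` to the image of `x^i_j` under the
toric map of `D̃_{M₁}` (embedded in the larger polynomial ring) times the monomial `T^{d_k}`,
and this second factor depends only on the factor index, not on `j`. Hence the images of
both monomials of `f_k` are the embedded images of the two monomials of `f`, each multiplied
by the same product `∏_l T^{d_{k_l}}`.
-/

open MvPolynomial


section FiberProduct

/-- The toric map of the matrix `D̃`: the variable `z¹_{jk} = Sum.inl (j, k)`
(for `j ∈ [n₁]`, `k ∈ [γ₂]`) is sent to `S^{b_j}·T^{d_k}·w₁` and the variable
`z²_{jk} = Sum.inr (j, k)` (for `j ∈ [γ₁]`, `k ∈ [n₂]`) to `S^{b_j}·T^{d_k}·w₂`. -/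
noncomputable def zToricMap (K : Type) [Field K] {d₁ n₁ γ₁ d₂ n₂ γ₂ : ℕ}
    (hγ₁ : γ₁ ≤ n₁) (hγ₂ : γ₂ ≤ n₂)
    (B : Fin n₁ → Finset (Fin d₁)) (D : Fin n₂ → Finset (Fin d₂)) :
    MvPolynomial ((Fin n₁ × Fin γ₂) ⊕ (Fin γ₁ × Fin n₂)) K →ₐ[K]
      MvPolynomial ((Fin d₁ ⊕ Fin d₂) ⊕ Fin 2) K :=
  aeval (Sum.elim
    (fun p => (∏ l ∈ B p.1, X (Sum.inl (Sum.inl l))) *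
      (∏ l ∈ D (Fin.castLE hγ₂ p.2), X (Sum.inl (Sum.inr l))) * X (Sum.inr 0))
    (fun p => (∏ l ∈ B (Fin.castLE hγ₁ p.1), X (Sum.inl (Sum.inl l))) *
      (∏ l ∈ D p.2, X (Sum.inl (Sum.inr l))) * X (Sum.inr 1)))

/-- The data of one factor of a binomial of `J_{D̃_{M₁}}` together with a chosen second
index `k_l`: a factor with superscript `1` carries `(j¹_l, j²_l, k_l) ∈ [n₁] × [n₁] × [γ₂]`
and a factor with superscript `2` carries `(j¹_l, j²_l, k_l) ∈ [γ₁] × [γ₁] × [n₂]`. -/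
def ZFac (n₁ γ₁ γ₂ n₂ : ℕ) : Type :=
  (Fin n₁ × Fin n₁ × Fin γ₂) ⊕ (Fin γ₁ × Fin γ₁ × Fin n₂)

/-- The variable `x^{i_l}_{j¹_l}` of a factor. -/
def facX1 {n₁ γ₁ γ₂ n₂ : ℕ} : ZFac n₁ γ₁ γ₂ n₂ → Fin n₁ ⊕ Fin γ₁
  | Sum.inl t => Sum.inl t.1
  | Sum.inr t => Sum.inr t.1

/-- The variable `x^{i_l}_{j²_l}` of a factor. -/
def facX2 {n₁ γ₁ γ₂ n₂ : ℕ} : ZFac n₁ γ₁ γ₂ n₂ → Fin n₁ ⊕ Fin γ₁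
  | Sum.inl t => Sum.inl t.2.1
  | Sum.inr t => Sum.inr t.2.1

/-- The variable `z^{i_l}_{j¹_l k_l}` of a factor. -/
def facZ1 {n₁ γ₁ γ₂ n₂ : ℕ} :
    ZFac n₁ γ₁ γ₂ n₂ → (Fin n₁ × Fin γ₂) ⊕ (Fin γ₁ × Fin n₂)
  | Sum.inl t => Sum.inl (t.1, t.2.2)
  | Sum.inr t => Sum.inr (t.1, t.2.2)

/-- The variable `z^{i_l}_{j²_l k_l}` of a factor. -/
def facZ2 {n₁ γ₁ γ₂ n₂ : ℕ} :
    ZFac n₁ γ₁ γ₂ n₂ → (Fin n₁ × Fin γ₂) ⊕ (Fin γ₁ × Fin n₂)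
  | Sum.inl t => Sum.inl (t.2.1, t.2.2)
  | Sum.inr t => Sum.inr (t.2.1, t.2.2)

end FiberProduct

theorem Finset.prod_eq_prod_of_map_mul {ι M N F : Type*} [CommMonoid M] [CommMonoid N]
    [FunLike F M N] [MonoidHomClass F M N] (g : F) (s : Finset ι)
    {x x' : ι → M} {y y' c : ι → N}
    (hy : ∀ i, y i = g (x i) * c i) (hy' : ∀ i, y' i = g (x' i) * c i)
    (hx : ∏ i ∈ s, x i = ∏ i ∈ s, x' i) :
    ∏ i ∈ s, y i = ∏ i ∈ s, y' i := by
  simp only [hy, hy', Finset.prod_mul_distrib, ← map_prod, hx]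

section Lifting

variable (K : Type) [Field K] {d₁ n₁ γ₁ d₂ n₂ γ₂ : ℕ}

/-- The inclusion `K[s, w] → K[s, t, w]` of the target of `π̃_{M₁}` into that of `π̃`. -/
noncomputable def tildeTargetEmbedding :
    MvPolynomial (Fin d₁ ⊕ Fin 2) K →ₐ[K] MvPolynomial ((Fin d₁ ⊕ Fin d₂) ⊕ Fin 2) K :=
  aeval (Sum.elim (fun l => X (Sum.inl (Sum.inl l))) (fun i => X (Sum.inr i)))

/-- The monomial `T^{d_{k_l}}` contributed by the second index of a factor. -/
noncomputable def facSecondMonomial (hγ₂ : γ₂ ≤ n₂) (D : Fin n₂ → Finset (Fin d₂)) :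
    ZFac n₁ γ₁ γ₂ n₂ → MvPolynomial ((Fin d₁ ⊕ Fin d₂) ⊕ Fin 2) K :=
  Sum.elim (fun p => ∏ l ∈ D (Fin.castLE hγ₂ p.2.2), X (Sum.inl (Sum.inr l)))
    (fun p => ∏ l ∈ D p.2.2, X (Sum.inl (Sum.inr l)))

variable (hγ₁ : γ₁ ≤ n₁) (hγ₂ : γ₂ ≤ n₂) (B : Fin n₁ → Finset (Fin d₁))
  (D : Fin n₂ → Finset (Fin d₂))

theorem zToricMap_X_facZ1 (s : ZFac n₁ γ₁ γ₂ n₂) :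
    zToricMap K hγ₁ hγ₂ B D (X (facZ1 s)) =
      tildeTargetEmbedding K (tildeToricMap K hγ₁ B (X (facX1 s))) *
        facSecondMonomial K hγ₂ D s := by
  rcases s with ⟨j, j', k⟩ | ⟨j, j', k⟩ <;>
    simp only [zToricMap, tildeToricMap, tildeTargetEmbedding, facSecondMonomial, facZ1,
      facX1, aeval_X, Sum.elim_inl, Sum.elim_inr, map_mul, map_prod] <;> ring

theorem zToricMap_X_facZ2 (s : ZFac n₁ γ₁ γ₂ n₂) :
    zToricMap K hγ₁ hγ₂ B D (X (facZ2 s)) =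
      tildeTargetEmbedding K (tildeToricMap K hγ₁ B (X (facX2 s))) *
        facSecondMonomial K hγ₂ D s := by
  rcases s with ⟨j, j', k⟩ | ⟨j, j', k⟩ <;>
    simp only [zToricMap, tildeToricMap, tildeTargetEmbedding, facSecondMonomial, facZ2,
      facX2, aeval_X, Sum.elim_inl, Sum.elim_inr, map_mul, map_prod] <;> ring

end Lifting

theorem statement10_general (K : Type) [Field K]
    {d₁ n₁ γ₁ d₂ n₂ γ₂ : ℕ}
    (B : Fin n₁ → Finset (Fin d₁))
    (hγ₁ : γ₁ ≤ n₁)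
    (D : Fin n₂ → Finset (Fin d₂))
    (hγ₂ : γ₂ ≤ n₂)
    (u : ℕ) (t : Fin u → ZFac n₁ γ₁ γ₂ n₂)
    (hf : (∏ l, X (facX1 (t l))) - (∏ l, X (facX2 (t l)))
      ∈ RingHom.ker (tildeToricMap K hγ₁ B).toRingHom) :
    (∏ l, X (facZ1 (t l))) - (∏ l, X (facZ2 (t l)))
      ∈ RingHom.ker (zToricMap K hγ₁ hγ₂ B D).toRingHom := by
  rw [RingHom.mem_ker] at hf ⊢
  simp only [AlgHom.toRingHom_eq_coe, RingHom.coe_coe, map_sub, sub_eq_zero, map_prod] at hf ⊢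
  exact Finset.prod_eq_prod_of_map_mul (tildeTargetEmbedding K) _
    (fun l => zToricMap_X_facZ1 K hγ₁ hγ₂ B D (t l))
    (fun l => zToricMap_X_facZ2 K hγ₁ hγ₂ B D (t l)) hf

/-- If `f = ∏_l x^{i_l}_{j¹_l} - ∏_l x^{i_l}_{j²_l}` is a homogeneous binomial in
`J_{D̃_{M₁}}` and `k = (k_1, …, k_u)` with `k_l ∈ [β_{i_l}]`, then
`f_k = ∏_l z^{i_l}_{j¹_l k_l} - ∏_l z^{i_l}_{j²_l k_l}` lies in `J_{D̃}`. -/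
theorem statement10 (K : Type) [Field K]
    {d₁ n₁ γ₁ d₂ n₂ γ₂ : ℕ}
    (M₁ : Matroid (Fin d₁)) (hE₁ : M₁.E = Set.univ)
    (B : Fin n₁ → Finset (Fin d₁)) (hBinj : Function.Injective B)
    (hBall : ∀ S : Finset (Fin d₁), M₁.IsBase ↑S ↔ ∃ j, B j = S)
    (c₁ : Fin d₁) (hc₁ : ¬ ∀ S, M₁.IsBase S → c₁ ∈ S)
    (hγ₁ : γ₁ ≤ n₁) (hsplit₁ : ∀ j : Fin n₁, c₁ ∉ B j ↔ (j : ℕ) < γ₁)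
    (M₂ : Matroid (Fin d₂)) (hE₂ : M₂.E = Set.univ)
    (D : Fin n₂ → Finset (Fin d₂)) (hDinj : Function.Injective D)
    (hDall : ∀ S : Finset (Fin d₂), M₂.IsBase ↑S ↔ ∃ k, D k = S)
    (c₂ : Fin d₂) (hc₂ : ¬ ∀ S, M₂.IsBase S → c₂ ∈ S)
    (hγ₂ : γ₂ ≤ n₂) (hsplit₂ : ∀ k : Fin n₂, c₂ ∉ D k ↔ (k : ℕ) < γ₂)
    (u : ℕ) (t : Fin u → ZFac n₁ γ₁ γ₂ n₂)
    (hf : (∏ l, X (facX1 (t l))) - (∏ l, X (facX2 (t l)))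
      ∈ RingHom.ker (tildeToricMap K hγ₁ B).toRingHom) :
    (∏ l, X (facZ1 (t l))) - (∏ l, X (facZ2 (t l)))
      ∈ RingHom.ker (zToricMap K hγ₁ hγ₂ B D).toRingHom :=
  statement10_general K B hγ₁ D hγ₂ u t hf
end
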